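/- arXiv:1905.08268 — 8 statements merged into one kernel-verified Lean document; each statement's English description precedes it below -/
import Mathlib

section
/- For a probability distribution P_X on a finite set and ε ∈ (0,1), the quadratic program f_QP(P_X, ε) := inf { Σ_x g_x² : Σ_x g_x p_x ≥ √(1−ε²), 0 ≤ g_x ≤ 1 } has an optimal solution of the form g_x = min(a*·p_x/2, 1) for some a* ≥ 0, and at this optimum the constraint Σ_x g_x p_x ≥ √(1−ε²) holds with equality. -/
/-!
The candidate `g_x = min (a p_x / 2) 1` is what the Lagrangian `∑ g_x² - a ∑ g_x p_x` yields
after clipping to `[0, 1]`. Its linear constraint value grows continuously from `0` at `a = 0`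
to `∑ p_x = 1` for large `a`, so by the intermediate value theorem some `a ≥ 0` makes the
constraint tight. Optimality then follows from the first-order inequality
`q² + a p (g - q) ≤ g²` for `q = min (a p / 2) 1` and any `g ≤ 1`, summed over `x`: the
multiplier term is nonnegative because `g` is feasible and `q` meets the constraint with equality.
-/

open Finset

/-- The quadratic program `f_QP(P_X, ε)` from the paper:
`inf { Σ_x g_x² : Σ_x g_x p_x ≥ √(1−ε²), 0 ≤ g_x ≤ 1 }`. -/
noncomputable def fQP {ι : Type*} [Fintype ι] (p : ι → ℝ) (ε : ℝ) : ℝ :=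
  sInf {v : ℝ | ∃ g : ι → ℝ, (∀ x, 0 ≤ g x ∧ g x ≤ 1) ∧
    Real.sqrt (1 - ε ^ 2) ≤ ∑ x, g x * p x ∧ v = ∑ x, (g x) ^ 2}

lemma min_sq_add_two_mul_le_sq {t g : ℝ} (hg : g ≤ 1) :
    min t 1 ^ 2 + 2 * t * (g - min t 1) ≤ g ^ 2 := by
  rcases le_total t 1 with ht | ht
  · rw [min_eq_left ht]
    nlinarith [sq_nonneg (g - t)]
  · rw [min_eq_right ht]
    nlinarith [sq_nonneg (g - 1)]

section

variable {ι : Type*} [Fintype ι] {p : ι → ℝ}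

lemma sum_min_sq_le_sum_sq {a : ℝ} (ha : 0 ≤ a) {g : ι → ℝ} (hg : ∀ x, g x ≤ 1)
    (hcon : ∑ x, min (a * p x / 2) 1 * p x ≤ ∑ x, g x * p x) :
    ∑ x, min (a * p x / 2) 1 ^ 2 ≤ ∑ x, g x ^ 2 := by
  set q : ι → ℝ := fun x => min (a * p x / 2) 1
  have hslack : 0 ≤ a * ∑ x, (g x - q x) * p x := by
    refine mul_nonneg ha ?_
    simp only [sub_mul, sum_sub_distrib]
    linarith
  calc ∑ x, q x ^ 2 ≤ ∑ x, q x ^ 2 + a * ∑ x, (g x - q x) * p x := le_add_of_nonneg_right hslack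
    _ = ∑ x, (q x ^ 2 + 2 * (a * p x / 2) * (g x - q x)) := by
      rw [mul_sum, ← sum_add_distrib]
      exact sum_congr rfl fun x _ => by ring
    _ ≤ ∑ x, g x ^ 2 := sum_le_sum fun x _ => min_sq_add_two_mul_le_sq (hg x)

lemma sum_min_mul_eq_sum (hp : ∀ x, 0 ≤ p x) {a : ℝ} (ha : ∀ x, 2 / p x ≤ a) :
    ∑ x, min (a * p x / 2) 1 * p x = ∑ x, p x := by
  refine sum_congr rfl fun x _ => ?_
  rcases (hp x).eq_or_lt with hpx | hpx
  · simp [← hpx]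
  · have : 1 ≤ a * p x / 2 := by
      have := ha x
      rw [div_le_iff₀ hpx] at this
      linarith
    rw [min_eq_right this, one_mul]

lemma exists_sum_min_mul_eq (hp : ∀ x, 0 ≤ p x) {s : ℝ} (hs : s ∈ Set.Icc 0 (∑ x, p x)) :
    ∃ a, 0 ≤ a ∧ ∑ x, min (a * p x / 2) 1 * p x = s := by
  set b := ∑ x, 2 / p x
  have hb : ∀ x, 2 / p x ≤ b := fun x =>
    single_le_sum (fun y _ => div_nonneg zero_le_two (hp y)) (mem_univ x)
  have hb0 : 0 ≤ b := sum_nonneg fun x _ => div_nonneg zero_le_two (hp x)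
  have hcont : Continuous fun a : ℝ => ∑ x, min (a * p x / 2) 1 * p x := by fun_prop
  have hs' : s ∈ Set.Icc (∑ x, min (0 * p x / 2) 1 * p x) (∑ x, min (b * p x / 2) 1 * p x) := by
    simpa [sum_min_mul_eq_sum hp hb] using hs
  obtain ⟨a, ha, heq⟩ := intermediate_value_Icc hb0 hcont.continuousOn hs'
  exact ⟨a, ha.1, heq⟩

lemma fQP_eq_sum_sq {ε : ℝ} {q : ι → ℝ} (hq : ∀ x, 0 ≤ q x ∧ q x ≤ 1)
    (hqcon : Real.sqrt (1 - ε ^ 2) ≤ ∑ x, q x * p x)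
    (hmin : ∀ g : ι → ℝ, (∀ x, 0 ≤ g x ∧ g x ≤ 1) → Real.sqrt (1 - ε ^ 2) ≤ ∑ x, g x * p x →
      ∑ x, q x ^ 2 ≤ ∑ x, g x ^ 2) :
    fQP p ε = ∑ x, q x ^ 2 := by
  refine IsLeast.csInf_eq ⟨⟨q, hq, hqcon, rfl⟩, ?_⟩
  rintro v ⟨g, hg, hgcon, rfl⟩
  exact hmin g hg hgcon

end

theorem qp_optimizer_form_general {ι : Type*} [Fintype ι] (p : ι → ℝ) (ε : ℝ)
    (hp : ∀ x, 0 ≤ p x) (hps : ∑ x, p x = 1) :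
    ∃ a : ℝ, 0 ≤ a ∧
      (∀ x, 0 ≤ min (a * p x / 2) 1 ∧ min (a * p x / 2) 1 ≤ 1) ∧
      (∑ x, min (a * p x / 2) 1 * p x = Real.sqrt (1 - ε ^ 2)) ∧
      (∑ x, (min (a * p x / 2) 1) ^ 2 = fQP p ε) := by
  have hs : Real.sqrt (1 - ε ^ 2) ∈ Set.Icc 0 (∑ x, p x) :=
    ⟨Real.sqrt_nonneg _, hps ▸ Real.sqrt_le_one.mpr (sub_le_self _ (sq_nonneg ε))⟩
  obtain ⟨a, ha, htight⟩ := exists_sum_min_mul_eq hp hs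
  have hbounds : ∀ x, 0 ≤ min (a * p x / 2) 1 ∧ min (a * p x / 2) 1 ≤ 1 := fun x =>
    ⟨le_min (by have := hp x; positivity) zero_le_one, min_le_right _ _⟩
  refine ⟨a, ha, hbounds, htight, (fQP_eq_sum_sq hbounds htight.ge fun g hg hgcon => ?_).symm⟩
  exact sum_min_sq_le_sum_sq ha (fun x => (hg x).2) (htight.trans_le hgcon)

/-- the QP has an optimizer of the form `g_x = min(a⋆ p_x / 2, 1)` for some
`a⋆ ≥ 0`, which is feasible, attains the optimal value, and satisfies the linear
constraint with equality. -/
theorem qp_optimizer_form {ι : Type*} [Fintype ι] (p : ι → ℝ) (ε : ℝ)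
    (hp : ∀ x, 0 ≤ p x) (hps : ∑ x, p x = 1) (hε : ε ∈ Set.Ioo (0 : ℝ) 1) :
    ∃ a : ℝ, 0 ≤ a ∧
      (∀ x, 0 ≤ min (a * p x / 2) 1 ∧ min (a * p x / 2) 1 ≤ 1) ∧
      (∑ x, min (a * p x / 2) 1 * p x = Real.sqrt (1 - ε ^ 2)) ∧
      (∑ x, (min (a * p x / 2) 1) ^ 2 = fQP p ε) :=
  qp_optimizer_form_general p ε hp hps
end

section
/- For any probability distribution P_X on a finite set and ε ∈ (0,1), there exists η ≥ 0 (namely η = (a*/2)·Σ_x p_x²·𝟙{a*·p_x/2 < 1} for an optimizer a* of the QP) such that f_QP(P_X, ε) ≥ β_{√(1−ε²) − η}(P_X, 𝟙). -/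
open Finset

/-- The classical hypothesis testing quantity `β_α(P_X, 𝟙)`. -/
noncomputable def beta {ι : Type*} [Fintype ι] (α : ℝ) (p : ι → ℝ) : ℝ :=
  sInf {v : ℝ | ∃ Λ : ι → ℝ, (∀ x, 0 ≤ Λ x ∧ Λ x ≤ 1) ∧
    α ≤ ∑ x, Λ x * p x ∧ v = ∑ x, Λ x}

/-!
The candidate optimizer of the QP is `g_x = min (a p_x / 2) 1`, with `a ≥ 0` chosen by the
intermediate value theorem so that the constraint `∑ g_x p_x = √(1 - ε²)` is tight. It is
optimal by the first-order (KKT) condition: `g_x² + a p_x (t - g_x) ≤ t²` for every `t ≤ 1`,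
and summing over `x` gives `∑ g_x² ≤ ∑ t_x²` for any feasible `t`. Then `Λ = g²` is a feasible
test for `β`: it loses at most `g_x (1 - g_x) p_x ≤ (a/2) p_x²` of power on the coordinates where
`g_x < 1`, and none elsewhere, which is `η` after summation.
-/

lemma sq_min_one_add_le {c t : ℝ} (ht : t ≤ 1) :
    (min c 1) ^ 2 + 2 * c * (t - min c 1) ≤ t ^ 2 := by
  rcases le_total c 1 with hc | hc
  · rw [min_eq_left hc]
    nlinarith [sq_nonneg (t - c)]
  · rw [min_eq_right hc]
    nlinarith

section

variable {ι : Type*} [Fintype ι] {p : ι → ℝ}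

lemma isLeast_fQP {ε a : ℝ} (ha : 0 ≤ a) (hp : ∀ x, 0 ≤ p x)
    (haS : ∑ x, min (a * p x / 2) 1 * p x = Real.sqrt (1 - ε ^ 2)) :
    IsLeast {v : ℝ | ∃ g : ι → ℝ, (∀ x, 0 ≤ g x ∧ g x ≤ 1) ∧
      Real.sqrt (1 - ε ^ 2) ≤ ∑ x, g x * p x ∧ v = ∑ x, (g x) ^ 2}
      (∑ x, (min (a * p x / 2) 1) ^ 2) := by
  set g : ι → ℝ := fun x => min (a * p x / 2) 1
  refine ⟨⟨g, fun x => ⟨le_min (by have := hp x; positivity) zero_le_one, min_le_right _ _⟩,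
    haS.ge, rfl⟩, ?_⟩
  rintro _ ⟨t, ht, htS, rfl⟩
  have hsum : ∑ x, (g x ^ 2 + a * p x * (t x - g x)) ≤ ∑ x, t x ^ 2 :=
    sum_le_sum fun x _ => by
      have := sq_min_one_add_le (c := a * p x / 2) (ht x).2
      linarith
  have hgain : ∑ x, a * p x * (t x - g x) = a * (∑ x, t x * p x - ∑ x, g x * p x) := by
    rw [mul_sub, mul_sum, mul_sum, ← sum_sub_distrib]
    exact sum_congr rfl fun x _ => by ring
  have : 0 ≤ a * (∑ x, t x * p x - ∑ x, g x * p x) :=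
    mul_nonneg ha (by simp only [g]; linarith)
  rw [sum_add_distrib, hgain] at hsum
  linarith

lemma fQP_eq_sum_sq_s3 {ε a : ℝ} (ha : 0 ≤ a) (hp : ∀ x, 0 ≤ p x)
    (haS : ∑ x, min (a * p x / 2) 1 * p x = Real.sqrt (1 - ε ^ 2)) :
    fQP p ε = ∑ x, (min (a * p x / 2) 1) ^ 2 :=
  (isLeast_fQP ha hp haS).csInf_eq

lemma beta_le_sum {α : ℝ} {Λ : ι → ℝ} (hΛ : ∀ x, 0 ≤ Λ x ∧ Λ x ≤ 1)
    (hα : α ≤ ∑ x, Λ x * p x) : beta α p ≤ ∑ x, Λ x :=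
  csInf_le ⟨0, by rintro _ ⟨Λ', hΛ', -, rfl⟩; exact sum_nonneg fun x _ => (hΛ' x).1⟩
    ⟨Λ, hΛ, hα, rfl⟩

lemma min_mul_sub_sq_mul_le {a q : ℝ} (hq : 0 ≤ q) :
    min (a * q / 2) 1 * q - (min (a * q / 2) 1) ^ 2 * q
      ≤ a / 2 * (if a * q / 2 < 1 then q ^ 2 else 0) := by
  split_ifs with h
  · rw [min_eq_left h.le]
    nlinarith [mul_nonneg (sq_nonneg (a * q / 2)) hq]
  · rw [min_eq_right (not_lt.1 h)]
    simp

lemma sum_min_mul_sub_le_sum_sq_mul {a : ℝ} (hp : ∀ x, 0 ≤ p x) :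
    ∑ x, min (a * p x / 2) 1 * p x - a / 2 * ∑ x, (if a * p x / 2 < 1 then (p x) ^ 2 else 0)
      ≤ ∑ x, (min (a * p x / 2) 1) ^ 2 * p x := by
  have := sum_le_sum fun x (_ : x ∈ univ) => min_mul_sub_sq_mul_le (a := a) (hp x)
  rw [sum_sub_distrib, ← mul_sum] at this
  linarith

end

theorem qp_ge_beta_shifted_general {ι : Type*} [Fintype ι] (p : ι → ℝ) (ε : ℝ)
    (hp : ∀ x, 0 ≤ p x) (hps : ∑ x, p x = 1) :
    ∃ a η : ℝ, 0 ≤ a ∧ 0 ≤ η ∧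
      (∑ x, min (a * p x / 2) 1 * p x = Real.sqrt (1 - ε ^ 2)) ∧
      (∑ x, (min (a * p x / 2) 1) ^ 2 = fQP p ε) ∧
      η = a / 2 * ∑ x, (if a * p x / 2 < 1 then (p x) ^ 2 else 0) ∧
      beta (Real.sqrt (1 - ε ^ 2) - η) p ≤ fQP p ε := by
  have hS : Real.sqrt (1 - ε ^ 2) ∈ Set.Icc 0 (∑ x, p x) :=
    ⟨Real.sqrt_nonneg _, hps.symm ▸ Real.sqrt_le_one.2 (by nlinarith)⟩
  obtain ⟨a, ha, haS⟩ := exists_sum_min_mul_eq hp hS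
  have hη : 0 ≤ a / 2 * ∑ x, (if a * p x / 2 < 1 then (p x) ^ 2 else 0) := by
    refine mul_nonneg (by positivity) (sum_nonneg fun x _ => ?_)
    split_ifs <;> positivity
  have hfQP := fQP_eq_sum_sq_s3 ha hp haS
  refine ⟨a, _, ha, hη, haS, hfQP.symm, rfl, hfQP ▸ beta_le_sum (fun x => ?_) ?_⟩
  · have h0 : 0 ≤ min (a * p x / 2) 1 := le_min (by have := hp x; positivity) zero_le_one
    exact ⟨sq_nonneg _, pow_le_one₀ h0 (min_le_right _ _)⟩
  · simpa only [haS] using sum_min_mul_sub_le_sum_sq_mul (a := a) hp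

/-- there is an `η ≥ 0` (namely `η = (a⋆/2) Σ_x p_x² 𝟙{a⋆ p_x/2 < 1}` for an
optimizer `a⋆` of the single-variable QP, satisfying `Σ_x min(a⋆ p_x/2,1) p_x = √(1−ε²)`)
with `f_QP(P_X, ε) ≥ β_{√(1−ε²) − η}(P_X, 𝟙)`. -/
theorem qp_ge_beta_shifted {ι : Type*} [Fintype ι] (p : ι → ℝ) (ε : ℝ)
    (hp : ∀ x, 0 ≤ p x) (hps : ∑ x, p x = 1) (hε : ε ∈ Set.Ioo (0 : ℝ) 1) :
    ∃ a η : ℝ, 0 ≤ a ∧ 0 ≤ η ∧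
      (∑ x, min (a * p x / 2) 1 * p x = Real.sqrt (1 - ε ^ 2)) ∧
      (∑ x, (min (a * p x / 2) 1) ^ 2 = fQP p ε) ∧
      η = a / 2 * ∑ x, (if a * p x / 2 < 1 then (p x) ^ 2 else 0) ∧
      beta (Real.sqrt (1 - ε ^ 2) - η) p ≤ fQP p ε :=
  qp_ge_beta_shifted_general p ε hp hps
end

section
/- Let ρ_AR = Σ_x √(p_x) |xx⟩ be a pure bipartite state with Schmidt coefficients p_x and let Π = Σ_x |xx⟩⟨xx|. If the pair (σ_AR, λ) satisfies λ·𝟙_A ⊗ ρ_R ≥ σ_AR, Tr[ρ_AR σ_AR] ≥ 1 − ε², σ_R ≤ ρ_R, σ_AR ≥ 0, then (Π σ_AR Π, λ) satisfies the same constraints. -/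
/-!
`Π` is a diagonal projection, so it commutes with the diagonal matrix `λ 𝟙 ⊗ ρ_R`, and it fixes
`|ρ⟩`. Hence `λ 𝟙 ⊗ ρ_R - Π σ Π = Π (λ 𝟙 ⊗ ρ_R - σ) Π + (1 - Π) (λ 𝟙 ⊗ ρ_R) (1 - Π)`, a sum of
two positive matrices because `λ 𝟙 ⊗ ρ_R ≥ σ ≥ 0`, and `Tr[ρ Π σ Π] = Tr[Π ρ Π σ] = Tr[ρ σ]`.
Finally `Tr_A[Π σ Π]` is the diagonal matrix with entries `σ_{rr,rr}`, each bounded by the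
diagonal entry `(Tr_A σ)_{rr} ≤ p_r`; as `ρ_R` is diagonal, this is all `ρ_R - Tr_A[Π σ Π] ≥ 0`
asks for.
-/

open Matrix Finset
open scoped ComplexOrder Kronecker

/-- Outer product `|v⟩⟨v|`. -/
def outer {n : Type*} (v : n → ℂ) : Matrix n n ℂ :=
  Matrix.of fun i j => v i * star (v j)

/-- Partial trace over the first (A) factor. -/
noncomputable def ptraceA {dA dR : ℕ} (σ : Matrix (Fin dA × Fin dR) (Fin dA × Fin dR) ℂ) :
    Matrix (Fin dR) (Fin dR) ℂ :=
  Matrix.of fun r r' => ∑ a, σ (a, r) (a, r')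

/-- The purification vector `|ρ⟩ = Σ_x √(p_x) |xx⟩`. -/
noncomputable def schmidtVec {d : ℕ} (p : Fin d → ℝ) : Fin d × Fin d → ℂ :=
  fun xy => if xy.1 = xy.2 then (Real.sqrt (p xy.1) : ℂ) else 0

namespace Matrix

variable {n R : Type*} [Fintype n]

theorem trace_mul_conj_of_mul_eq_self [CommSemiring R] [StarRing R] {ρ P : Matrix n n R}
    (hρ : IsSelfAdjoint ρ) (hP : IsSelfAdjoint P) (hPρ : P * ρ = ρ) (σ : Matrix n n R) :
    (ρ * (P * σ * P)).trace = (ρ * σ).trace := by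
  have hρP : ρ * P = ρ := by
    simpa only [star_mul, hP.star_eq, hρ.star_eq] using congrArg star hPρ
  rw [← mul_assoc, ← mul_assoc, hρP, trace_mul_comm, ← mul_assoc, hPρ]

section PosSemidef

variable [CommRing R] [PartialOrder R] [StarRing R]

theorem PosSemidef.conj_of_isSelfAdjoint {A P : Matrix n n R} (hA : A.PosSemidef)
    (hP : IsSelfAdjoint P) : (P * A * P).PosSemidef := by
  simpa only [← star_eq_conjTranspose, hP.star_eq] using hA.mul_mul_conjTranspose_same P

theorem PosSemidef.sub_conj_of_isStarProjection [DecidableEq n] [AddLeftMono R]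
    {D σ P : Matrix n n R} (hDσ : (D - σ).PosSemidef) (hσ : σ.PosSemidef)
    (hP : IsStarProjection P) (hPD : Commute P D) : (D - P * σ * P).PosSemidef := by
  have hD : D.PosSemidef := by simpa using hDσ.add hσ
  have hsplit : D - P * σ * P = P * (D - σ) * P + (1 - P) * D * (1 - P) := by
    simp only [mul_sub, sub_mul, one_mul, mul_one, hPD.eq, mul_assoc, hP.isIdempotentElem.eq]
    abel
  rw [hsplit]
  exact (hDσ.conj_of_isSelfAdjoint hP.isSelfAdjoint).add
    (hD.conj_of_isSelfAdjoint hP.one_sub.isSelfAdjoint)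

end PosSemidef

end Matrix

theorem Matrix.isStarProjection_diagonal_ite {n R : Type*} [Fintype n] [DecidableEq n]
    [Semiring R] [StarRing R] (q : n → Prop) [DecidablePred q] :
    IsStarProjection (diagonal fun i => if q i then (1 : R) else 0) := by
  refine ⟨?_, ?_⟩
  · rw [IsIdempotentElem, diagonal_mul_diagonal]
    congr 1
    ext i
    by_cases h : q i <;> simp [h]
  · rw [IsSelfAdjoint, star_eq_conjTranspose, diagonal_conjTranspose]
    congr 1
    ext i
    by_cases h : q i <;> simp [h]

theorem isSelfAdjoint_outer {n : Type*} (v : n → ℂ) : IsSelfAdjoint (outer v) := by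
  ext i j
  simp [outer, mul_comm]

theorem diagonal_mul_outer {n : Type*} [Fintype n] [DecidableEq n] {f v : n → ℂ}
    (hfv : ∀ i, f i * v i = v i) : diagonal f * outer v = outer v := by
  ext i j
  simp [outer, diagonal_mul, ← mul_assoc, hfv]

theorem Matrix.PosSemidef.apply_le_ptraceA {dA dR : ℕ}
    {σ : Matrix (Fin dA × Fin dR) (Fin dA × Fin dR) ℂ} (hσ : σ.PosSemidef) (a : Fin dA)
    (r : Fin dR) : σ (a, r) (a, r) ≤ ptraceA σ r r :=
  Finset.single_le_sum (f := fun a => σ (a, r) (a, r)) (fun _ _ => hσ.diag_nonneg) (mem_univ a)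

/-- The projector `Π = Σ_x |xx⟩⟨xx|` onto the span of the Schmidt basis. -/
noncomputable def pinchProj (d : ℕ) : Matrix (Fin d × Fin d) (Fin d × Fin d) ℂ :=
  diagonal fun xy => if xy.1 = xy.2 then 1 else 0

theorem isStarProjection_pinchProj (d : ℕ) : IsStarProjection (pinchProj d) :=
  isStarProjection_diagonal_ite _

theorem pinchProj_mul_outer_schmidtVec {d : ℕ} (p : Fin d → ℝ) :
    pinchProj d * outer (schmidtVec p) = outer (schmidtVec p) :=
  diagonal_mul_outer fun xy => by by_cases h : xy.1 = xy.2 <;> simp [schmidtVec, h]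

theorem commute_pinchProj_one_kronecker_diagonal {d : ℕ} (p : Fin d → ℂ) :
    Commute (pinchProj d) ((1 : Matrix (Fin d) (Fin d) ℂ) ⊗ₖ diagonal p) := by
  rw [← diagonal_one, diagonal_kronecker_diagonal]
  exact commute_diagonal _ _

theorem ptraceA_pinchProj_conj {d : ℕ} (σ : Matrix (Fin d × Fin d) (Fin d × Fin d) ℂ) :
    ptraceA (pinchProj d * σ * pinchProj d) = diagonal fun r => σ (r, r) (r, r) := by
  ext r r'
  simp only [ptraceA, pinchProj, of_apply, mul_diagonal, diagonal_mul, diagonal_apply]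
  rw [Finset.sum_eq_single r (fun a _ ha => by simp [ha]) (by simp)]
  by_cases h : r = r' <;> simp [h]

theorem posSemidef_diagonal_sub_ptraceA_pinchProj_conj {d : ℕ} {p : Fin d → ℂ}
    {σ : Matrix (Fin d × Fin d) (Fin d × Fin d) ℂ} (hpσ : (diagonal p - ptraceA σ).PosSemidef)
    (hσ : σ.PosSemidef) : (diagonal p - ptraceA (pinchProj d * σ * pinchProj d)).PosSemidef := by
  rw [ptraceA_pinchProj_conj, diagonal_sub, posSemidef_diagonal_iff]
  intro r
  have := hpσ.diag_nonneg (i := r)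
  rw [Matrix.sub_apply, diagonal_apply_eq] at this
  exact sub_nonneg.mpr ((hσ.apply_le_ptraceA r r).trans (sub_nonneg.mp this))

theorem pinched_still_feasible_general {d : ℕ} (p : Fin d → ℝ) (ε : ℝ)
    (l : ℝ) (σ : Matrix (Fin d × Fin d) (Fin d × Fin d) ℂ)
    (ρAR : Matrix (Fin d × Fin d) (Fin d × Fin d) ℂ) (hρAR : ρAR = outer (schmidtVec p))
    (ρR : Matrix (Fin d) (Fin d) ℂ) (hρR : ρR = Matrix.diagonal fun x => (p x : ℂ))
    (Pr : Matrix (Fin d × Fin d) (Fin d × Fin d) ℂ)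
    (hPr : Pr = Matrix.diagonal fun xy => if xy.1 = xy.2 then (1 : ℂ) else 0)
    (h1 : ((l : ℂ) • ((1 : Matrix (Fin d) (Fin d) ℂ) ⊗ₖ ρR) - σ).PosSemidef)
    (h2 : 1 - ε ^ 2 ≤ ((ρAR * σ).trace).re)
    (h3 : (ρR - ptraceA σ).PosSemidef)
    (h4 : σ.PosSemidef) :
    ((l : ℂ) • ((1 : Matrix (Fin d) (Fin d) ℂ) ⊗ₖ ρR) - Pr * σ * Pr).PosSemidef ∧
    1 - ε ^ 2 ≤ ((ρAR * (Pr * σ * Pr)).trace).re ∧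
    (ρR - ptraceA (Pr * σ * Pr)).PosSemidef ∧
    (Pr * σ * Pr).PosSemidef := by
  obtain rfl : Pr = pinchProj d := hPr
  subst hρAR hρR
  have hP := isStarProjection_pinchProj d
  refine ⟨?_, ?_, posSemidef_diagonal_sub_ptraceA_pinchProj_conj h3 h4,
    h4.conj_of_isSelfAdjoint hP.isSelfAdjoint⟩
  · exact h1.sub_conj_of_isStarProjection h4 hP
      ((commute_pinchProj_one_kronecker_diagonal _).smul_right _)
  · rwa [trace_mul_conj_of_mul_eq_self (isSelfAdjoint_outer _) hP.isSelfAdjoint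
      (pinchProj_mul_outer_schmidtVec p)]

/-- if `(σ_AR, λ)` is feasible for the partially smoothed min-entropy SDP of
the pure state `ρ_AR = Σ_x √p_x |xx⟩` (with pure-state smoothing constraint
`Tr[ρ_AR σ_AR] ≥ 1 − ε²`), then so is `(Pr σ_AR Pr, λ)` where `Pr = Σ_x |xx⟩⟨xx|`. -/
theorem pinched_still_feasible {d : ℕ} (p : Fin d → ℝ) (hp : ∀ x, 0 ≤ p x)
    (hps : ∑ x, p x = 1) (ε : ℝ) (hε : ε ∈ Set.Ioo (0 : ℝ) 1)
    (l : ℝ) (σ : Matrix (Fin d × Fin d) (Fin d × Fin d) ℂ)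
    (ρAR : Matrix (Fin d × Fin d) (Fin d × Fin d) ℂ) (hρAR : ρAR = outer (schmidtVec p))
    (ρR : Matrix (Fin d) (Fin d) ℂ) (hρR : ρR = Matrix.diagonal fun x => (p x : ℂ))
    (Pr : Matrix (Fin d × Fin d) (Fin d × Fin d) ℂ)
    (hPr : Pr = Matrix.diagonal fun xy => if xy.1 = xy.2 then (1 : ℂ) else 0)
    (h1 : ((l : ℂ) • ((1 : Matrix (Fin d) (Fin d) ℂ) ⊗ₖ ρR) - σ).PosSemidef)
    (h2 : 1 - ε ^ 2 ≤ ((ρAR * σ).trace).re)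
    (h3 : (ρR - ptraceA σ).PosSemidef)
    (h4 : σ.PosSemidef) :
    ((l : ℂ) • ((1 : Matrix (Fin d) (Fin d) ℂ) ⊗ₖ ρR) - Pr * σ * Pr).PosSemidef ∧
    1 - ε ^ 2 ≤ ((ρAR * (Pr * σ * Pr)).trace).re ∧
    (ρR - ptraceA (Pr * σ * Pr)).PosSemidef ∧
    (Pr * σ * Pr).PosSemidef :=
  pinched_still_feasible_general p ε l σ ρAR hρAR ρR hρR Pr hPr h1 h2 h3 h4
end

section
/- If ρ_AR = Σ_x p_x |x⟩⟨x|_A ⊗ |x⟩⟨x|_R for a probability distribution p_x, then for any distance measure Δ the partially smoothed conditional min-entropy equals the globally smoothed one: H_min^{ε,Δ}(A|Ṙ)_ρ = H_min^{ε,Δ}(A|R)_ρ. -/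
open Matrix Finset
open scoped ComplexOrder Kronecker

/-- The channel `σ ↦ Σ_x |xx⟩⟨xx| σ |xx⟩⟨xx|`. -/
noncomputable def ccPinch {d : ℕ} (σ : Matrix (Fin d × Fin d) (Fin d × Fin d) ℂ) :
    Matrix (Fin d × Fin d) (Fin d × Fin d) ℂ :=
  Matrix.of fun ij kl => if ij.1 = ij.2 ∧ ij = kl then σ ij kl else 0

/-!
For the classically correlated state both optimisations may be taken over the same set of
feasible `λ`. A partially feasible `σ` is globally feasible since `Tr σ = Tr σ_R ≤ Tr ρ_R = 1`.
Conversely, given a globally feasible `σ` for `λ`: if `λ ≥ 1` then `ρ_AR` itself is partially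
feasible; if `λ < 1`, the pinched state `Σ_x |xx⟩⟨xx| σ |xx⟩⟨xx|` is closer to `ρ_AR` than `σ`,
and its marginal on `R` is the diagonal `(σ_{xx,xx})_x ≤ (λ p_x)_x ≤ (p_x)_x = ρ_R`.
-/

namespace Matrix

variable {n R : Type*} [Ring R] [PartialOrder R] [StarRing R] [IsOrderedAddMonoid R]

lemma PosSemidef.diag_le_diag_of_sub {A B : Matrix n n R} (h : (A - B).PosSemidef) (i : n) :
    B i i ≤ A i i :=
  sub_nonneg.mp (by simpa using h.diag_nonneg (i := i))

lemma PosSemidef.trace_le_trace_of_sub [Fintype n] {A B : Matrix n n R} (h : (A - B).PosSemidef) :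
    B.trace ≤ A.trace :=
  sub_nonneg.mp (trace_sub A B ▸ h.trace_nonneg)

end Matrix

lemma Matrix.smul_one_kronecker_diagonal {m n α : Type*} [Semiring α] [DecidableEq m]
    [DecidableEq n] (l : α) (f : n → α) : l • ((1 : Matrix m m α) ⊗ₖ diagonal f) = diagonal fun i => l * f i.2 := by
  rw [← diagonal_one, diagonal_kronecker_diagonal, ← diagonal_smul]
  congr 1
  ext i
  simp

section PartialTrace

variable {dA dR : ℕ}

lemma trace_ptraceA (σ : Matrix (Fin dA × Fin dR) (Fin dA × Fin dR) ℂ) :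
    (ptraceA σ).trace = σ.trace := by
  simp only [trace, Matrix.diag_apply, ptraceA, of_apply, Fintype.sum_prod_type]
  exact Finset.sum_comm

lemma ptraceA_diagonal (g : Fin dA × Fin dR → ℂ) :
    ptraceA (diagonal g) = diagonal fun r => ∑ a, g (a, r) := by
  ext r r'
  by_cases h : r = r'
  · subst h; simp [ptraceA]
  · simp [ptraceA, h]

end PartialTrace

section ClassicallyCorrelated

variable {d : ℕ}

lemma ccPinch_eq_diagonal (σ : Matrix (Fin d × Fin d) (Fin d × Fin d) ℂ) :
    ccPinch σ = diagonal fun xy => if xy.1 = xy.2 then σ xy xy else 0 := by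
  ext ij kl
  by_cases h : ij = kl
  · subst h; simp [ccPinch]
  · simp [ccPinch, h]

lemma ptraceA_ccPinch (σ : Matrix (Fin d × Fin d) (Fin d × Fin d) ℂ) :
    ptraceA (ccPinch σ) = diagonal fun x => σ (x, x) (x, x) := by
  simp [ccPinch_eq_diagonal, ptraceA_diagonal]

lemma posSemidef_ccPinch {σ : Matrix (Fin d × Fin d) (Fin d × Fin d) ℂ} (hσ : σ.PosSemidef) :
    (ccPinch σ).PosSemidef := by
  rw [ccPinch_eq_diagonal, posSemidef_diagonal_iff]
  intro xy
  split_ifs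
  exacts [hσ.diag_nonneg, le_rfl]

lemma Matrix.PosSemidef.diagonal_sub_ccPinch {g : Fin d × Fin d → ℂ} (hg : ∀ i, 0 ≤ g i)
    {σ : Matrix (Fin d × Fin d) (Fin d × Fin d) ℂ} (h : (diagonal g - σ).PosSemidef) :
    (diagonal g - ccPinch σ).PosSemidef := by
  rw [ccPinch_eq_diagonal, diagonal_sub, posSemidef_diagonal_iff]
  intro xy
  split_ifs
  · simpa using h.diag_le_diag_of_sub xy
  · simpa using hg xy

/-- The classically correlated state `Σ_x p_x |x⟩⟨x|_A ⊗ |x⟩⟨x|_R`. -/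
noncomputable def ccState (p : Fin d → ℝ) : Matrix (Fin d × Fin d) (Fin d × Fin d) ℂ :=
  diagonal fun xy => if xy.1 = xy.2 then (p xy.1 : ℂ) else 0

lemma ptraceA_ccState (p : Fin d → ℝ) : ptraceA (ccState p) = diagonal fun x => (p x : ℂ) := by
  simp [ccState, ptraceA_diagonal]

variable {p : Fin d → ℝ}

lemma posSemidef_ccState (hp : ∀ x, 0 ≤ p x) : (ccState p).PosSemidef := by
  rw [ccState, posSemidef_diagonal_iff]
  intro xy
  split_ifs
  exacts [Complex.zero_le_real.mpr (hp _), le_rfl]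

lemma posSemidef_diagonal_sub_ccState (hp : ∀ x, 0 ≤ p x) {l : ℝ} (hl : 1 ≤ l) :
    (diagonal (fun xy : Fin d × Fin d => (l : ℂ) * p xy.2) - ccState p).PosSemidef := by
  rw [ccState, diagonal_sub, posSemidef_diagonal_iff]
  rintro ⟨x, y⟩
  dsimp only
  split_ifs with hxy
  · subst hxy
    exact_mod_cast (show 0 ≤ l * p x - p x by nlinarith [hp x])
  · rw [sub_zero]
    exact_mod_cast mul_nonneg (by linarith) (hp y)

lemma re_trace_le_one_of_posSemidef_sub_ptraceA (hps : ∑ x, p x = 1)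
    {σ : Matrix (Fin d × Fin d) (Fin d × Fin d) ℂ}
    (h : (diagonal (fun x => (p x : ℂ)) - ptraceA σ).PosSemidef) : σ.trace.re ≤ 1 := by
  have htr := trace_ptraceA σ ▸ h.trace_le_trace_of_sub
  rw [trace_diagonal, ← Complex.ofReal_sum, hps] at htr
  exact_mod_cast (Complex.le_def.mp htr).1

lemma posSemidef_sub_ptraceA_ccPinch (hp : ∀ x, 0 ≤ p x) {l : ℝ} (hl : l ≤ 1)
    {σ : Matrix (Fin d × Fin d) (Fin d × Fin d) ℂ}
    (h : (diagonal (fun xy : Fin d × Fin d => (l : ℂ) * p xy.2) - σ).PosSemidef) :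
    (diagonal (fun x => (p x : ℂ)) - ptraceA (ccPinch σ)).PosSemidef := by
  rw [ptraceA_ccPinch, diagonal_sub, posSemidef_diagonal_iff]
  intro x
  rw [sub_nonneg]
  calc σ (x, x) (x, x) ≤ (l : ℂ) * p x := by simpa using h.diag_le_diag_of_sub (x, x)
    _ ≤ p x := by exact_mod_cast mul_le_of_le_one_left (hp x) hl

end ClassicallyCorrelated

/-- for the classically correlated state
`ρ_AR = Σ_x p_x |x⟩⟨x|_A ⊗ |x⟩⟨x|_R` and any distance measure `Δ` (vanishing on equal
arguments and monotone under the pinching channel fixing `ρ_AR`), the partially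
smoothed conditional min-entropy equals the globally smoothed one. -/
theorem partial_eq_global_cc {d : ℕ} (p : Fin d → ℝ) (hp : ∀ x, 0 ≤ p x)
    (hps : ∑ x, p x = 1) (ε : ℝ) (hε : ε ∈ Set.Ioo (0 : ℝ) 1)
    (ρAR : Matrix (Fin d × Fin d) (Fin d × Fin d) ℂ)
    (hρAR : ρAR = Matrix.diagonal fun xy => if xy.1 = xy.2 then (p xy.1 : ℂ) else 0)
    (ρR : Matrix (Fin d) (Fin d) ℂ) (hρR : ρR = Matrix.diagonal fun x => (p x : ℂ))
    (Δ : Matrix (Fin d × Fin d) (Fin d × Fin d) ℂ →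
         Matrix (Fin d × Fin d) (Fin d × Fin d) ℂ → ℝ)
    (hΔrefl : Δ ρAR ρAR = 0)
    (hΔpinch : ∀ σ, Δ ρAR (ccPinch σ) ≤ Δ ρAR σ) :
    -Real.logb 2 (sInf {l : ℝ | 0 ≤ l ∧
        ∃ σ : Matrix (Fin d × Fin d) (Fin d × Fin d) ℂ,
          ((l : ℂ) • ((1 : Matrix (Fin d) (Fin d) ℂ) ⊗ₖ ρR) - σ).PosSemidef ∧
          Δ ρAR σ ≤ ε ∧ (ρR - ptraceA σ).PosSemidef ∧ σ.PosSemidef}) =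
    -Real.logb 2 (sInf {l : ℝ | 0 ≤ l ∧
        ∃ σ : Matrix (Fin d × Fin d) (Fin d × Fin d) ℂ,
          ((l : ℂ) • ((1 : Matrix (Fin d) (Fin d) ℂ) ⊗ₖ ρR) - σ).PosSemidef ∧
          Δ ρAR σ ≤ ε ∧ (σ.trace).re ≤ 1 ∧ σ.PosSemidef}) := by
  obtain rfl : ρAR = ccState p := hρAR
  subst hρR
  simp only [smul_one_kronecker_diagonal]
  congr 3
  ext l
  refine and_congr_right fun hl0 => ⟨fun ⟨σ, hσl, hσΔ, hσR, hσ⟩ =>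
    ⟨σ, hσl, hσΔ, re_trace_le_one_of_posSemidef_sub_ptraceA hps hσR, hσ⟩, ?_⟩
  rintro ⟨σ, hσl, hσΔ, -, hσ⟩
  rcases le_or_gt 1 l with hl1 | hl1
  · refine ⟨ccState p, posSemidef_diagonal_sub_ccState hp hl1, hΔrefl ▸ hε.1.le, ?_,
      posSemidef_ccState hp⟩
    rw [ptraceA_ccState, sub_self]
    exact .zero
  · have hg (xy : Fin d × Fin d) : 0 ≤ (l : ℂ) * p xy.2 := by exact_mod_cast mul_nonneg hl0 (hp _)
    exact ⟨ccPinch σ, hσl.diagonal_sub_ccPinch hg, (hΔpinch σ).trans hσΔ,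
      posSemidef_sub_ptraceA_ccPinch hp hl1.le hσl, posSemidef_ccPinch hσ⟩
end

section
/- For any bipartite probability distribution P_{XY} on a finite set and ε ∈ (0,1), the partially smoothed conditional min-entropy with trace-distance smoothing equals the globally smoothed one: H_min^{ε,T}(X|Ẏ)_P = H_min^{ε,T}(X|Y)_P. -/
open Finset

/-- Generalized trace distance between a distribution `P` and a subnormalized
nonnegative function `S` on a finite set:
`T(P,S) = ½ Σ |P − S| + ½ |Σ (P − S)|`. -/
noncomputable def tDist {X Y : Type*} [Fintype X] [Fintype Y]
    (P S : X → Y → ℝ) : ℝ :=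
  (1 / 2) * (∑ x, ∑ y, |P x y - S x y|) + (1 / 2) * |∑ x, ∑ y, (P x y - S x y)|

/-!
When `Σ S ≤ Σ P` the generalized trace distance is `T(P, S) = Σ (P − S)⁺`, which does not
change if `S` is replaced by `S ⊓ P`. So every globally feasible `S` can be cut down to
`S ⊓ P`, which meets the same bound `S ≤ λ P_Y` and the same smoothing constraint and in
addition satisfies the marginal constraint `Σ_x (S ⊓ P)(x, y) ≤ P_Y(y)`. Hence both
optimization problems have the same feasible values of `λ`.
-/

section tDist

variable {X Y : Type*} [Fintype X] [Fintype Y] {P S : X → Y → ℝ}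

theorem tDist_eq_sum_posPart (hS : ∑ x, ∑ y, S x y ≤ ∑ x, ∑ y, P x y) :
    tDist P S = ∑ x, ∑ y, max (P x y - S x y) 0 := by
  have hdiff : 0 ≤ ∑ x, ∑ y, (P x y - S x y) := by
    simp only [sum_sub_distrib]
    linarith
  have hpos : ∀ d : ℝ, max d 0 = (1 / 2) * |d| + (1 / 2) * d := fun d => by
    rcases le_total d 0 with hd | hd
    · rw [max_eq_right hd, abs_of_nonpos hd]; ring
    · rw [max_eq_left hd, abs_of_nonneg hd]; ring
  simp only [tDist, abs_of_nonneg hdiff, hpos, sum_add_distrib, mul_sum]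

theorem tDist_inf_self (hS : ∑ x, ∑ y, S x y ≤ ∑ x, ∑ y, P x y) :
    tDist P (S ⊓ P) = tDist P S := by
  have hinf : ∑ x, ∑ y, (S ⊓ P) x y ≤ ∑ x, ∑ y, P x y :=
    sum_le_sum fun x _ => sum_le_sum fun y _ => min_le_right _ _
  rw [tDist_eq_sum_posPart hS, tDist_eq_sum_posPart hinf]
  refine sum_congr rfl fun x _ => sum_congr rfl fun y _ => ?_
  rw [Pi.inf_apply, Pi.inf_apply, sub_inf, sub_self, max_eq_left (le_max_right _ _)]

end tDist

theorem classical_partial_eq_global_general {X Y : Type*} [Fintype X] [Fintype Y]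
    (P : X → Y → ℝ) (hP : ∀ x y, 0 ≤ P x y) (hPs : ∑ x, ∑ y, P x y = 1)
    (ε : ℝ) :
    -Real.logb 2 (sInf {l : ℝ | 0 ≤ l ∧ ∃ S : X → Y → ℝ,
        (∀ x y, 0 ≤ S x y) ∧
        (∀ x y, S x y ≤ l * ∑ x', P x' y) ∧
        tDist P S ≤ ε ∧
        (∀ y, ∑ x, S x y ≤ ∑ x', P x' y)}) =
    -Real.logb 2 (sInf {l : ℝ | 0 ≤ l ∧ ∃ S : X → Y → ℝ,
        (∀ x y, 0 ≤ S x y) ∧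
        (∀ x y, S x y ≤ l * ∑ x', P x' y) ∧
        tDist P S ≤ ε ∧
        (∑ x, ∑ y, S x y ≤ 1)}) := by
  congr 3
  ext l
  refine and_congr_right fun _ => ⟨?_, ?_⟩
  · rintro ⟨S, hS0, hSl, hT, hcol⟩
    refine ⟨S, hS0, hSl, hT, ?_⟩
    calc ∑ x, ∑ y, S x y = ∑ y, ∑ x, S x y := sum_comm
      _ ≤ ∑ y, ∑ x, P x y := sum_le_sum fun y _ => hcol y
      _ = 1 := by rw [sum_comm, hPs]
  · rintro ⟨S, hS0, hSl, hT, hsum⟩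
    refine ⟨S ⊓ P, fun x y => le_min (hS0 x y) (hP x y),
      fun x y => (min_le_left _ _).trans (hSl x y), ?_,
      fun y => sum_le_sum fun x _ => min_le_right _ _⟩
    rwa [tDist_inf_self (hPs ▸ hsum)]

/-- for any classical joint distribution `P_{XY}` and `ε ∈ (0,1)`, the
partially smoothed conditional min-entropy with trace-distance smoothing equals the
globally smoothed one. -/
theorem classical_partial_eq_global {X Y : Type*} [Fintype X] [Fintype Y]
    (P : X → Y → ℝ) (hP : ∀ x y, 0 ≤ P x y) (hPs : ∑ x, ∑ y, P x y = 1)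
    (ε : ℝ) (hε : ε ∈ Set.Ioo (0 : ℝ) 1) :
    -Real.logb 2 (sInf {l : ℝ | 0 ≤ l ∧ ∃ S : X → Y → ℝ,
        (∀ x y, 0 ≤ S x y) ∧
        (∀ x y, S x y ≤ l * ∑ x', P x' y) ∧
        tDist P S ≤ ε ∧
        (∀ y, ∑ x, S x y ≤ ∑ x', P x' y)}) =
    -Real.logb 2 (sInf {l : ℝ | 0 ≤ l ∧ ∃ S : X → Y → ℝ,
        (∀ x y, 0 ≤ S x y) ∧
        (∀ x y, S x y ≤ l * ∑ x', P x' y) ∧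
        tDist P S ≤ ε ∧
        (∑ x, ∑ y, S x y ≤ 1)}) :=
  classical_partial_eq_global_general P hP hPs ε
end

section
/- Let P_X be a probability distribution on a finite set, X₁,…,X_n i.i.d. with law P_X, and Z_j = −log₂ P_X(X_j). Then for every c > 0, E[ 2^{−Σ_j Z_j} · 𝟙{Σ_j Z_j ≥ log₂ c} ] ≤ (G/√n) · (1/c), where G is a constant depending only on the second and third moments of Z (and not on n or c). -/
/-!
Cutting at the dyadic levels `log₂ c + l`, the expectation is at most
`Σ_l 2^(-l) / c · P(S_n ∈ [log₂ c + l, log₂ c + l + 1))`, so it suffices that `S_n = Σ_j Z_j`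
puts mass `O(1/√n)` into every window of length one. For this, write `P_X` as a mixture in
which, with probability `2α > 0`, the letter is a fair coin flip between two letters `i₀, i₁`
with `Z i₀ ≠ Z i₁`. Given which coordinates flip coins, `S_n` is an affine image of a
Binomial(m, 1/2) variable: its atoms have mass `O(1/√m)` (central binomial coefficient) and a
window contains `O(1)` of them. Finally `m ≥ αn` outside an event of probability at most
`(2^α (1 - α))^n`, which is `O(1/√n)`.
-/

open Finset

theorem Nat.centralBinom_sq_mul_le (t : ℕ) : t.centralBinom ^ 2 * (2 * t + 1) ≤ 16 ^ t := by
  induction t with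
  | zero => simp
  | succ t ih =>
    have key : (t + 1) ^ 2 * ((t + 1).centralBinom ^ 2 * (2 * (t + 1) + 1))
        ≤ (t + 1) ^ 2 * 16 ^ (t + 1) := by
      calc (t + 1) ^ 2 * ((t + 1).centralBinom ^ 2 * (2 * (t + 1) + 1))
          = 4 * (2 * t + 3) * (2 * t + 1) * (t.centralBinom ^ 2 * (2 * t + 1)) := by
            rw [← mul_assoc, ← mul_pow, Nat.succ_mul_centralBinom_succ]; ring
        _ ≤ 4 * (2 * t + 3) * (2 * t + 1) * 16 ^ t := by gcongr
        _ ≤ (t + 1) ^ 2 * 16 * 16 ^ t := Nat.mul_le_mul_right _ (by nlinarith)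
        _ = (t + 1) ^ 2 * 16 ^ (t + 1) := by ring
    exact Nat.le_of_mul_le_mul_left key (by positivity)

theorem Nat.choose_sq_mul_succ_le (m k : ℕ) : m.choose k ^ 2 * (m + 1) ≤ 4 ^ (m + 1) := by
  set t := (m + 1) / 2
  calc m.choose k ^ 2 * (m + 1) ≤ t.centralBinom ^ 2 * (2 * t + 1) := by
        gcongr
        · exact (Nat.choose_le_choose k (by omega)).trans (Nat.choose_le_centralBinom k t)
        · omega
    _ ≤ 16 ^ t := t.centralBinom_sq_mul_le
    _ = 4 ^ (2 * t) := by rw [pow_mul]; norm_num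
    _ ≤ 4 ^ (m + 1) := Nat.pow_le_pow_right (by norm_num) (by omega)

theorem choose_div_two_pow_le (m k : ℕ) : (m.choose k : ℝ) / 2 ^ m ≤ 2 / √(m + 1) := by
  rw [div_le_div_iff₀ (by positivity) (by positivity)]
  refine (pow_le_pow_iff_left₀ (by positivity) (by positivity) two_ne_zero).mp ?_
  rw [mul_pow, Real.sq_sqrt (by positivity)]
  calc (m.choose k : ℝ) ^ 2 * (m + 1) ≤ 4 ^ (m + 1) := by
        exact_mod_cast m.choose_sq_mul_succ_le k
    _ = (2 * 2 ^ m) ^ 2 := by rw [pow_succ, mul_pow, ← pow_mul, pow_mul']; norm_num; ring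

theorem card_le_of_forall_mem_Ico {δ : ℝ} (hδ : δ ≠ 0) {a c : ℝ} {A : Finset ℕ}
    (hA : ∀ k ∈ A, c + k * δ ∈ Set.Ico a (a + 1)) : #A ≤ ⌊1 / |δ|⌋₊ + 1 := by
  rcases A.eq_empty_or_nonempty with rfl | hne
  · simp
  have hsub : A ⊆ Icc (A.min' hne) (A.min' hne + ⌊1 / |δ|⌋₊) := by
    intro k hk
    have hk₀ := A.min'_le k hk
    have hdist : ((k : ℝ) - A.min' hne) * |δ| < 1 := by
      have h₁ := hA k hk
      have h₂ := hA _ (A.min'_mem hne)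
      rw [Set.mem_Ico] at h₁ h₂
      rw [← abs_of_nonneg (sub_nonneg.mpr (Nat.cast_le.mpr hk₀)), ← abs_mul, abs_lt]
      constructor <;> nlinarith
    have : k - A.min' hne ≤ ⌊1 / |δ|⌋₊ := by
      apply Nat.le_floor
      rw [Nat.cast_sub hk₀, le_div_iff₀ (abs_pos.mpr hδ)]
      exact hdist.le
    exact mem_Icc.mpr ⟨hk₀, by omega⟩
  exact (card_le_card hsub).trans_eq (by rw [Nat.card_Icc]; omega)

section FairCoins

variable {σ : Type*} [Fintype σ] [DecidableEq σ]

theorem card_filter_card_filter_eq_le (T : Finset σ) (k : ℕ) :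
    #{b : σ → Bool | #{j ∈ T | b j} = k} ≤ (#T).choose k * 2 ^ (Fintype.card σ - #T) := by
  have hcard : #(T.powersetCard k ×ˢ Tᶜ.powerset)
      = (#T).choose k * 2 ^ (Fintype.card σ - #T) := by
    rw [card_product, card_powersetCard, card_powerset, card_compl]
  rw [← hcard]
  refine card_le_card_of_injOn (fun b => ({j ∈ T | b j}, {j ∈ Tᶜ | b j})) ?_ ?_
  · intro b hb
    exact mem_product.mpr ⟨mem_powersetCard.mpr ⟨filter_subset _ _, (mem_filter.mp hb).2⟩,
      mem_powerset.mpr (filter_subset _ _)⟩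
  · intro b₁ _ b₂ _ h
    rw [Prod.mk.injEq] at h
    have hunion : ∀ b : σ → Bool, {j ∈ T | b j} ∪ {j ∈ Tᶜ | b j} = ({j | b j} : Finset σ) :=
      fun b => by rw [← filter_union, union_compl]
    have h₁₂ : ({j | b₁ j} : Finset σ) = ({j | b₂ j} : Finset σ) := by
      rw [← hunion, ← hunion, h.1, h.2]
    funext j
    simpa using congrArg (j ∈ ·) h₁₂

theorem card_Ico_div_two_pow_le (T : Finset σ) {δ : ℝ} (hδ : δ ≠ 0) (a c : ℝ) :
    (#{b : σ → Bool | c + #{j ∈ T | b j} * δ ∈ Set.Ico a (a + 1)} : ℝ) / 2 ^ Fintype.card σ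
      ≤ (⌊1 / |δ|⌋₊ + 1) * (2 / √(#T + 1)) := by
  set A : Finset ℕ := {k ∈ range (#T + 1) | c + (k : ℝ) * δ ∈ Set.Ico a (a + 1)}
  set B : Finset (σ → Bool) := {b | c + #{j ∈ T | b j} * δ ∈ Set.Ico a (a + 1)}
  have hmaps : Set.MapsTo (fun b : σ → Bool => #{j ∈ T | b j}) B A := fun b hb =>
    mem_filter.mpr ⟨mem_range.mpr (Nat.lt_succ_of_le (card_le_card (filter_subset _ _))),
      (mem_filter.mp hb).2⟩
  have hT : #T ≤ Fintype.card σ := card_le_univ T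
  calc (#B : ℝ) / 2 ^ Fintype.card σ
      ≤ (∑ k ∈ A, (#T).choose k * 2 ^ (Fintype.card σ - #T) : ℕ) / 2 ^ Fintype.card σ := by
        rw [card_eq_sum_card_fiberwise hmaps]
        gcongr with k
        exact (card_le_card (filter_subset_filter _ (filter_subset _ _))).trans
          (card_filter_card_filter_eq_le T k)
    _ = ∑ k ∈ A, ((#T).choose k : ℝ) / 2 ^ #T := by
        rw [Nat.cast_sum, sum_div]
        refine sum_congr rfl fun k _ => ?_
        rw [Nat.cast_mul, Nat.cast_pow, Nat.cast_two, ← Nat.sub_add_cancel hT, pow_add,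
          Nat.add_sub_cancel]
        field_simp
    _ ≤ ∑ _k ∈ A, 2 / √(#T + 1) := sum_le_sum fun k _ => choose_div_two_pow_le _ k
    _ ≤ (⌊1 / |δ|⌋₊ + 1) * (2 / √(#T + 1)) := by
        rw [sum_const, nsmul_eq_mul]
        gcongr
        exact_mod_cast card_le_of_forall_mem_Ico hδ fun k hk => (mem_filter.mp hk).2

/-- The first term is the Chernoff-type weight of the event `#T < α · |σ|`. -/
theorem card_Ico_div_two_pow_le_rpow_add [Nonempty σ] (T : Finset σ) {δ : ℝ} (hδ : δ ≠ 0)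
    (a c : ℝ) {α : ℝ} (hα : 0 < α) :
    (#{b : σ → Bool | c + #{j ∈ T | b j} * δ ∈ Set.Ico a (a + 1)} : ℝ) / 2 ^ Fintype.card σ
      ≤ (2 : ℝ) ^ (Fintype.card σ * α) * (1 / 2) ^ #T
        + (⌊1 / |δ|⌋₊ + 1) * (2 / √(Fintype.card σ * α)) := by
  set n := Fintype.card σ
  have hM : 0 ≤ (⌊1 / |δ|⌋₊ + 1 : ℝ) * (2 / √(n * α)) := by positivity
  rcases lt_or_ge (#T : ℝ) (n * α) with hsmall | hlarge
  · have hcount : (#{b : σ → Bool | c + #{j ∈ T | b j} * δ ∈ Set.Ico a (a + 1)} : ℝ) / 2 ^ n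
        ≤ 1 := by
      rw [div_le_one (by positivity)]
      exact_mod_cast (card_filter_le _ _).trans_eq (by simp [n])
    have hexp : 1 ≤ (2 : ℝ) ^ (n * α) * (1 / 2) ^ #T := by
      rw [one_div, inv_pow, ← div_eq_mul_inv, one_le_div (by positivity), ← Real.rpow_natCast]
      exact Real.rpow_le_rpow_of_exponent_le one_le_two hsmall.le
    linarith
  · have hn : (0 : ℝ) < n := by exact_mod_cast Fintype.card_pos
    calc _ ≤ (⌊1 / |δ|⌋₊ + 1) * (2 / √(#T + 1)) := card_Ico_div_two_pow_le T hδ a c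
      _ ≤ (⌊1 / |δ|⌋₊ + 1) * (2 / √(n * α)) := by gcongr; linarith
      _ ≤ _ := le_add_of_nonneg_left (by positivity)

end FairCoins

theorem Fintype.sum_prod_mul_pow_card_filter {κ R : Type*} [Fintype κ] [CommSemiring R]
    (q : κ → R) (P : κ → Prop) [DecidablePred P] (t : R) (n : ℕ) :
    ∑ v : Fin n → κ, (∏ j, q (v j)) * t ^ #{j | P (v j)}
      = (∑ o, q o * if P o then t else 1) ^ n := by
  rw [Fintype.sum_pow]
  refine Finset.sum_congr rfl fun v _ => ?_
  rw [← prod_const, prod_filter, ← prod_mul_distrib]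

theorem sum_prod_mul_half_pow_card_filter_eq {κ : Type*} [Fintype κ] [DecidableEq κ]
    {q : κ → ℝ} (hqs : ∑ o, q o = 1) (o₀ : κ) (n : ℕ) :
    ∑ v : Fin n → κ, (∏ j, q (v j)) * (1 / 2) ^ #{j | v j = o₀} = (1 - q o₀ / 2) ^ n := by
  have h : ∀ o, q o * (if o = o₀ then 1 / 2 else 1) = q o - if o = o₀ then q o₀ / 2 else 0 := by
    intro o; split_ifs with ho <;> simp [ho]; ring
  rw [Fintype.sum_prod_mul_pow_card_filter q (· = o₀)]
  simp only [h, sum_sub_distrib, sum_ite_eq', mem_univ, if_true, hqs]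

theorem pow_le_inv_one_sub_div_sqrt {r : ℝ} (hr₀ : 0 ≤ r) (hr₁ : r < 1) {n : ℕ} (hn : 1 ≤ n) :
    r ^ n ≤ (1 - r)⁻¹ / √n := by
  have hgeom : n * r ^ n ≤ (1 - r)⁻¹ := by
    calc n * r ^ n = ∑ _k ∈ range n, r ^ n := by simp
      _ ≤ ∑ k ∈ range n, r ^ k := sum_le_sum fun k hk =>
          pow_le_pow_of_le_one hr₀ hr₁.le (mem_range.mp hk).le
      _ ≤ r ^ 0 / (1 - r) := by rw [range_eq_Ico]; exact geom_sum_Ico_le_of_lt_one hr₀ hr₁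
      _ = (1 - r)⁻¹ := by simp
  have hsqrt : √n ≤ n := Real.sqrt_le_self_iff.mpr (.inr (by exact_mod_cast hn))
  rw [le_div_iff₀ (by positivity)]
  nlinarith [pow_nonneg hr₀ n]

theorem two_rpow_mul_one_sub_lt_one {α : ℝ} (hα : 0 < α) : (2 : ℝ) ^ α * (1 - α) < 1 := by
  rcases le_or_gt 1 α with h | h
  · nlinarith [Real.rpow_pos_of_pos two_pos α]
  have h2 : (2 : ℝ) ^ α ≤ Real.exp α := by
    rw [Real.rpow_def_of_pos two_pos]
    exact Real.exp_le_exp.mpr (by nlinarith [Real.log_two_lt_d9])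
  calc (2 : ℝ) ^ α * (1 - α) ≤ Real.exp α * (1 - α) :=
        mul_le_mul_of_nonneg_right h2 (by linarith)
    _ < Real.exp α * Real.exp (-α) := by
        gcongr; linarith [Real.add_one_lt_exp (neg_ne_zero.mpr hα.ne')]
    _ = 1 := by rw [← Real.exp_add, add_neg_cancel, Real.exp_zero]

/-- `v` draws the letters from `q`; at the coordinates where `v j = o₀` a fair coin `b j` adds
`δ` or not. -/
theorem exists_sum_prod_mul_card_Ico_div_two_pow_le {κ : Type*} [Fintype κ] [DecidableEq κ]
    {q : κ → ℝ} (hq : ∀ o, 0 ≤ q o) (hqs : ∑ o, q o = 1) {o₀ : κ} (hq₀ : 0 < q o₀) (y : κ → ℝ)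
    {δ : ℝ} (hδ : δ ≠ 0) :
    ∃ K, 0 < K ∧ ∀ n : ℕ, 1 ≤ n → ∀ a : ℝ,
      ∑ v : Fin n → κ, (∏ j, q (v j)) *
        ((#{b : Fin n → Bool | ∑ j, y (v j) + #{j | v j = o₀ ∧ b j} * δ ∈ Set.Ico a (a + 1)}
          : ℝ) / 2 ^ n) ≤ K / √n := by
  set α := q o₀ / 2
  have hα : 0 < α := half_pos hq₀
  have hα₁ : α ≤ 1 := by
    have := hqs ▸ single_le_sum (fun o _ => hq o) (mem_univ o₀)
    linarith [show α = q o₀ / 2 from rfl]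
  set r := (2 : ℝ) ^ α * (1 - α)
  have hr₀ : 0 ≤ r := mul_nonneg (by positivity) (by linarith)
  have hr₁ : r < 1 := two_rpow_mul_one_sub_lt_one hα
  set D := (⌊1 / |δ|⌋₊ + 1 : ℝ) * (2 / √α) with hD
  refine ⟨(1 - r)⁻¹ + D, add_pos (inv_pos.mpr (sub_pos.mpr hr₁)) (by positivity),
    fun n hn a => ?_⟩
  have : Nonempty (Fin n) := ⟨⟨0, hn⟩⟩
  have hwindow : ∀ v : Fin n → κ,
      (#{b : Fin n → Bool | ∑ j, y (v j) + #{j | v j = o₀ ∧ b j} * δ ∈ Set.Ico a (a + 1)}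
        : ℝ) / 2 ^ n ≤ (2 : ℝ) ^ (n * α) * (1 / 2) ^ #{j | v j = o₀} + D / √n := by
    intro v
    have h := card_Ico_div_two_pow_le_rpow_add {j | v j = o₀} hδ a (∑ j, y (v j)) hα
    rw [Fintype.card_fin] at h
    simp only [filter_filter] at h
    convert h using 2
    rw [Real.sqrt_mul (Nat.cast_nonneg n), hD]
    ring
  have hpow : (2 : ℝ) ^ (n * α) = ((2 : ℝ) ^ α) ^ n := by
    rw [mul_comm, Real.rpow_mul zero_le_two, Real.rpow_natCast]
  calc _ ≤ ∑ v : Fin n → κ, (∏ j, q (v j)) *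
          ((2 : ℝ) ^ (n * α) * (1 / 2) ^ #{j | v j = o₀} + D / √n) := by
        gcongr with v
        · exact prod_nonneg fun j _ => hq _
        · exact hwindow v
    _ = (2 : ℝ) ^ (n * α) * (1 - α) ^ n + D / √n := by
        simp only [mul_add, sum_add_distrib, ← sum_mul, mul_left_comm _ ((2 : ℝ) ^ (n * α)),
          ← mul_sum, ← Fintype.sum_pow, hqs, one_pow, one_mul,
          sum_prod_mul_half_pow_card_filter_eq hqs]
        rfl
    _ = r ^ n + D / √n := by rw [hpow, ← mul_pow]
    _ ≤ (1 - r)⁻¹ / √n + D / √n := by gcongr; exact pow_le_inv_one_sub_div_sqrt hr₀ hr₁ hn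
    _ = ((1 - r)⁻¹ + D) / √n := (add_div _ _ _).symm

theorem sum_filter_prod_eq_of_sum_fiber_eq {ι Ω σ R : Type*} [Fintype ι] [Fintype Ω]
    [Fintype σ] [DecidableEq ι] [DecidableEq σ] [CommSemiring R] {p : ι → R} {W : Ω → R}
    {V : Ω → ι} (hW : ∀ i, ∑ u with V u = i, W u = p i) (P : (σ → ι) → Prop)
    [DecidablePred P] :
    ∑ x with P x, ∏ j, p (x j) = ∑ y : σ → Ω with P (V ∘ y), ∏ j, W (y j) := by
  rw [← sum_fiberwise_of_maps_to (g := (V ∘ ·)) (t := {x | P x})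
    (fun y hy => mem_filter.mpr ⟨mem_univ _, (mem_filter.mp hy).2⟩)]
  refine sum_congr rfl fun x hx => ?_
  have hfiber : Fintype.piFinset (fun j => ({u | V u = x j} : Finset Ω))
      = ({y | P (V ∘ y) ∧ V ∘ y = x} : Finset (σ → Ω)) := by
    ext y
    simp only [Fintype.mem_piFinset, mem_filter, mem_univ, true_and, funext_iff,
      Function.comp_apply]
    exact ⟨fun h => ⟨by convert (mem_filter.mp hx).2; exact funext h, h⟩, And.right⟩
  simp_rw [← hW, prod_univ_sum, hfiber, filter_filter]

/-- The letters of the fair-coin mixture: `(none, b)` is the coin flip between `i₀` and `i₁`,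
`(some i, _)` is the letter `i`. -/
def coinSplit {ι : Type*} (i₀ i₁ : ι) : Option ι × Bool → ι
  | (none, b) => cond b i₁ i₀
  | (some i, _) => i

theorem sum_coinSplit {ι σ : Type*} [Fintype σ] (Z : ι → ℝ) (i₀ i₁ : ι) (v : σ → Option ι)
    (b : σ → Bool) :
    ∑ j, Z (coinSplit i₀ i₁ (v j, b j))
      = ∑ j, Z (coinSplit i₀ i₁ (v j, false)) + #{j | v j = none ∧ b j} * (Z i₁ - Z i₀) := by
  have h : ∀ j, Z (coinSplit i₀ i₁ (v j, b j))
      = Z (coinSplit i₀ i₁ (v j, false)) + if v j = none ∧ b j then Z i₁ - Z i₀ else 0 := by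
    intro j
    rcases v j with _ | i <;> cases b j <;> simp [coinSplit]
  rw [sum_congr rfl fun j _ => h j, sum_add_distrib, ← sum_filter, sum_const, nsmul_eq_mul]

theorem exists_coinSplit_mixture {ι : Type*} [Fintype ι] [DecidableEq ι] {p : ι → ℝ}
    (hp : ∀ i, 0 ≤ p i) (hps : ∑ i, p i = 1) {i₀ i₁ : ι} (h01 : i₀ ≠ i₁) (hp₀ : 0 < p i₀)
    (hp₁ : 0 < p i₁) :
    ∃ q : Option ι → ℝ, (∀ o, 0 ≤ q o) ∧ ∑ o, q o = 1 ∧ 0 < q none ∧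
      ∀ i, ∑ u with coinSplit i₀ i₁ u = i, q u.1 / 2 = p i := by
  set α := min (p i₀) (p i₁)
  let q : Option ι → ℝ
    | none => 2 * α
    | some i => p i - (if i = i₀ then α else 0) - (if i = i₁ then α else 0)
  refine ⟨q, ?_, ?_, by simp [q, α, hp₀, hp₁], ?_⟩
  · rintro (_ | i)
    · simp [q, α, hp₀.le, hp₁.le]
    · have := hp i
      have := min_le_left (p i₀) (p i₁)
      have := min_le_right (p i₀) (p i₁)
      simp only [q]
      split_ifs <;> subst_vars <;> first | exact absurd rfl h01 | linarith
  · simp [q, Fintype.sum_option, sum_sub_distrib, hps]; ring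
  · intro i
    rw [sum_filter, Fintype.sum_prod_type, Fintype.sum_option]
    simp only [coinSplit, q, Fintype.sum_bool, cond_true, cond_false, sum_add_distrib]
    by_cases h₀ : i₀ = i <;> by_cases h₁ : i₁ = i <;> simp_all [eq_comm]

theorem sum_filter_prod_fst_div_two {κ σ : Type*} [Fintype κ] [Fintype σ] [DecidableEq σ]
    (q : κ → ℝ) (P : (σ → κ × Bool) → Prop) [DecidablePred P] :
    ∑ y with P y, ∏ j, q (y j).1 / 2
      = ∑ v : σ → κ, (∏ j, q (v j)) *
          ((#{b : σ → Bool | P (fun j => (v j, b j))} : ℝ) / 2 ^ Fintype.card σ) := by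
  rw [sum_filter,
    ← (Equiv.arrowProdEquivProdArrow σ (fun _ => κ) (fun _ => Bool)).symm.sum_comp,
    Fintype.sum_prod_type]
  refine sum_congr rfl fun v _ => ?_
  rw [← sum_filter]
  change ∑ b : σ → Bool with P (fun j => (v j, b j)), ∏ j, q (v j) / 2 = _
  rw [sum_const, prod_div_distrib, prod_const, card_univ, nsmul_eq_mul]
  ring

theorem exists_sum_filter_prod_le_div_sqrt {ι : Type*} [Fintype ι] {p : ι → ℝ}
    (hp : ∀ i, 0 ≤ p i) (hps : ∑ i, p i = 1) (Z : ι → ℝ) {i₀ i₁ : ι} (hp₀ : 0 < p i₀)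
    (hp₁ : 0 < p i₁) (hZ : Z i₀ ≠ Z i₁) :
    ∃ K, 0 < K ∧ ∀ n : ℕ, 1 ≤ n → ∀ a : ℝ,
      ∑ x : Fin n → ι with ∑ j, Z (x j) ∈ Set.Ico a (a + 1), ∏ j, p (x j) ≤ K / √n := by
  classical
  obtain ⟨q, hq, hqs, hq₀, hfiber⟩ :=
    exists_coinSplit_mixture hp hps (fun h => hZ (congrArg Z h)) hp₀ hp₁
  obtain ⟨K, hK, hwindow⟩ := exists_sum_prod_mul_card_Ico_div_two_pow_le hq hqs hq₀
    (fun o => Z (coinSplit i₀ i₁ (o, false))) (sub_ne_zero.mpr hZ.symm)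
  refine ⟨K, hK, fun n hn a => ?_⟩
  rw [sum_filter_prod_eq_of_sum_fiber_eq hfiber, sum_filter_prod_fst_div_two, Fintype.card_fin]
  have h := hwindow n hn a
  simp only [← sum_coinSplit] at h
  exact h

theorem mul_ite_rpow_neg_le_sum {β w s L : ℝ} (hβ : 1 ≤ β) (hw : 0 ≤ w) {N : ℕ}
    (hN : s - L < N) :
    w * (if L ≤ s then β ^ (-s) else 0)
      ≤ ∑ l ∈ range N, β ^ (-(L + l)) * (if s ∈ Set.Ico (L + l) (L + l + 1) then w else 0) := by
  have hnonneg : ∀ l ∈ range N,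
      0 ≤ β ^ (-(L + l)) * (if s ∈ Set.Ico (L + l) (L + l + 1) then w else 0) :=
    fun l _ => mul_nonneg (by positivity) (by split_ifs <;> simp [hw])
  split_ifs with hL
  · set l₀ := ⌊s - L⌋₊
    have hl₀ : (l₀ : ℝ) ≤ s - L := Nat.floor_le (by linarith)
    have hl₀' : s - L < l₀ + 1 := Nat.lt_floor_add_one _
    have hl₀N : l₀ < N := by exact_mod_cast hl₀.trans_lt hN
    refine le_trans ?_ (single_le_sum hnonneg (mem_range.mpr hl₀N))
    rw [if_pos ⟨by linarith, by linarith⟩, mul_comm]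
    exact mul_le_mul_of_nonneg_right (Real.rpow_le_rpow_of_exponent_le hβ (by linarith)) hw
  · rw [mul_zero]
    exact sum_nonneg hnonneg

theorem sum_mul_ite_rpow_neg_le {α : Type*} [Fintype α] {w S : α → ℝ} (hw : ∀ x, 0 ≤ w x)
    {ε : ℝ} (hε : ∀ a, ∑ x with S x ∈ Set.Ico a (a + 1), w x ≤ ε) {β : ℝ} (hβ : 1 < β)
    (L : ℝ) :
    ∑ x, w x * (if L ≤ S x then β ^ (-S x) else 0) ≤ β / (β - 1) * ε * β ^ (-L) := by
  obtain ⟨N, hN⟩ := exists_nat_gt (∑ x, |S x| - L)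
  have hε₀ : 0 ≤ ε := (sum_nonneg fun x _ => hw x).trans (hε 0)
  have hterm : ∀ x, w x * (if L ≤ S x then β ^ (-S x) else 0)
      ≤ ∑ l ∈ range N, β ^ (-(L + l)) * (if S x ∈ Set.Ico (L + l) (L + l + 1) then w x else 0) :=
    fun x => mul_ite_rpow_neg_le_sum hβ.le (hw x) <| by
      linarith [(le_abs_self _).trans (single_le_sum (fun y _ => abs_nonneg (S y)) (mem_univ x))]
  have hgeom : ∑ l ∈ range N, β⁻¹ ^ l ≤ β / (β - 1) := by
    have := geom_sum_Ico_le_of_lt_one (m := 0) (n := N) (inv_nonneg.mpr (by linarith))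
      (inv_lt_one_of_one_lt₀ hβ)
    rw [← range_eq_Ico, pow_zero] at this
    calc _ ≤ 1 / (1 - β⁻¹) := this
      _ = β / (β - 1) := by field_simp
  calc _ ≤ ∑ x, ∑ l ∈ range N,
          β ^ (-(L + l)) * (if S x ∈ Set.Ico (L + l) (L + l + 1) then w x else 0) :=
        sum_le_sum fun x _ => hterm x
    _ = ∑ l ∈ range N, β ^ (-L) * β⁻¹ ^ l * ∑ x with S x ∈ Set.Ico (L + l) (L + l + 1), w x := by
        rw [sum_comm]
        refine sum_congr rfl fun l _ => ?_
        rw [sum_filter, mul_sum, neg_add, Real.rpow_add (by linarith),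
          Real.rpow_neg (by linarith) l, Real.rpow_natCast, inv_pow]
    _ ≤ ∑ l ∈ range N, β ^ (-L) * β⁻¹ ^ l * ε := by gcongr with l; exact hε _
    _ = β ^ (-L) * ε * ∑ l ∈ range N, β⁻¹ ^ l := by
        rw [mul_sum]; exact sum_congr rfl fun l _ => by ring
    _ ≤ β ^ (-L) * ε * (β / (β - 1)) := by gcongr
    _ = β / (β - 1) * ε * β ^ (-L) := by ring

theorem exists_ne_of_variance_pos {ι : Type*} [Fintype ι] {p : ι → ℝ} (hp : ∀ i, 0 ≤ p i)
    (hps : ∑ i, p i = 1) (f : ι → ℝ) (hvar : 0 < ∑ i, p i * f i ^ 2 - (∑ i, p i * f i) ^ 2) :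
    ∃ i j, 0 < p i ∧ 0 < p j ∧ f i ≠ f j := by
  by_contra! hconst
  obtain ⟨i₀, -, hi₀⟩ := exists_lt_of_sum_lt (s := univ) (f := 0) (g := p) (by simp [hps])
  have hsupp : ∀ (g : ℝ → ℝ) i, p i * g (f i) = p i * g (f i₀) := by
    intro g i
    rcases (hp i).eq_or_lt with h | h
    · rw [← h, zero_mul, zero_mul]
    · rw [hconst i i₀ h hi₀]
  have h₁ := sum_congr rfl fun i (_ : i ∈ univ) => hsupp id i
  have h₂ := sum_congr rfl fun i (_ : i ∈ univ) => hsupp (· ^ 2) i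
  simp only [id, ← sum_mul, hps, one_mul] at h₁ h₂
  rw [h₁, h₂] at hvar
  simp at hvar

/-- Polyanskiy–Poor–Verdú Lemma 47, specialized: for i.i.d.
`Z_j = −log₂ P_X(X_j)` with positive variance, there is a constant `G`
(independent of `n` and `c`) such that
`E[2^{−Σ_j Z_j} · 𝟙{Σ_j Z_j ≥ log₂ c}] ≤ (G/√n)·(1/c)` for all `n ≥ 1`, `c > 0`.
The expectation is written out explicitly over the product distribution. -/
theorem ppv_concentration {ι : Type*} [Fintype ι] (p : ι → ℝ)
    (hp : ∀ x, 0 ≤ p x) (hps : ∑ x, p x = 1)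
    (hvar : 0 < (∑ x, p x * (Real.logb 2 (p x)) ^ 2)
              - (∑ x, p x * Real.logb 2 (p x)) ^ 2) :
    ∃ G : ℝ, 0 < G ∧ ∀ n : ℕ, 1 ≤ n → ∀ c : ℝ, 0 < c →
      ∑ x : Fin n → ι, (∏ j, p (x j)) *
        (if Real.logb 2 c ≤ ∑ j, (-(Real.logb 2 (p (x j)))) then
          (2 : ℝ) ^ (-(∑ j, (-(Real.logb 2 (p (x j)))))) else 0)
      ≤ G / Real.sqrt n * (1 / c) := by
  obtain ⟨i₀, i₁, hp₀, hp₁, hne⟩ :=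
    exists_ne_of_variance_pos hp hps (fun x => Real.logb 2 (p x)) hvar
  obtain ⟨K, hK, hwindow⟩ := exists_sum_filter_prod_le_div_sqrt hp hps
    (fun x => -Real.logb 2 (p x)) hp₀ hp₁ (neg_injective.ne hne)
  refine ⟨2 * K, by positivity, fun n hn c hc => ?_⟩
  have h := sum_mul_ite_rpow_neg_le (fun x => prod_nonneg fun j _ => hp (x j)) (hwindow n hn)
    one_lt_two (Real.logb 2 c)
  rw [Real.rpow_neg zero_le_two, Real.rpow_logb two_pos (by norm_num) hc] at h
  calc _ ≤ _ := h
    _ = 2 * K / √n * (1 / c) := by ring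
end

section
/- For any joint probability distribution P_{XY} on finite sets and ε ∈ (0,1), the partially smoothed classical max mutual information equals the globally smoothed one: the optimization inf { Σ_y R(y) : P_X(x)R(y) ≥ Q(x,y), T(x,y) + Q(x,y) ≥ P(x,y), Σ T ≤ ε, Q_X = P_X, Q,T,R ≥ 0 } has the same value as the relaxation in which the constraint Q_X = P_X is replaced by Σ_{x,y} Q(x,y) = 1. -/
/-!
A feasible point of the relaxed problem already forces `∑ R ≥ 1`, because
`1 = ∑ Q ≤ (∑ P) (∑ R) = ∑ R`. Hence, for every `x`, the row sum `P_X(x)` lies between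
`∑_y max(P(x,y) - T(x,y), 0)` and `∑_y P_X(x) R(y)`, and interpolating between these two rows
gives a `Q'` with marginal `P_X` that satisfies every other constraint with the same `T` and `R`.
-/

open Finset

theorem exists_le_le_sum_eq {ι : Type*} [Fintype ι] {lo hi : ι → ℝ} (h : lo ≤ hi) {s : ℝ}
    (hlo : ∑ i, lo i ≤ s) (hhi : s ≤ ∑ i, hi i) :
    ∃ f : ι → ℝ, lo ≤ f ∧ f ≤ hi ∧ ∑ i, f i = s := by
  set g : ℝ → ι → ℝ := fun t i => lo i + t * (hi i - lo i)
  have hcont : ContinuousOn (fun t => ∑ i, g t i) (Set.Icc 0 1) := by fun_prop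
  obtain ⟨t, ⟨ht0, ht1⟩, hts⟩ :=
    intermediate_value_Icc zero_le_one hcont ⟨by simpa [g] using hlo, by simpa [g] using hhi⟩
  refine ⟨g t, fun i => ?_, fun i => ?_, hts⟩
  · have := mul_nonneg ht0 (sub_nonneg.2 (h i))
    simp only [g]
    linarith
  · have := mul_nonneg (sub_nonneg.2 ht1) (sub_nonneg.2 (h i))
    simp only [g]
    linarith

theorem one_le_sum_of_le_marginal_mul {X Y : Type*} [Fintype X] [Fintype Y]
    {P Q : X → Y → ℝ} {R : Y → ℝ} (hPs : ∑ x, ∑ y, P x y = 1)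
    (hQR : ∀ x y, Q x y ≤ (∑ y', P x y') * R y) (hQs : ∑ x, ∑ y, Q x y = 1) :
    1 ≤ ∑ y, R y :=
  calc 1 = ∑ x, ∑ y, Q x y := hQs.symm
    _ ≤ ∑ x, ∑ y, (∑ y', P x y') * R y := by gcongr with x _ y _; exact hQR x y
    _ = ∑ y, R y := by simp_rw [← mul_sum, ← sum_mul, hPs, one_mul]

theorem exists_marginal_eq_of_sum_eq_one {X Y : Type*} [Fintype X] [Fintype Y]
    {P Q T : X → Y → ℝ} {R : Y → ℝ} (hP : ∀ x y, 0 ≤ P x y) (hPs : ∑ x, ∑ y, P x y = 1)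
    (hQ : ∀ x y, 0 ≤ Q x y) (hT : ∀ x y, 0 ≤ T x y)
    (hQR : ∀ x y, Q x y ≤ (∑ y', P x y') * R y) (hPTQ : ∀ x y, P x y ≤ T x y + Q x y)
    (hQs : ∑ x, ∑ y, Q x y = 1) :
    ∃ Q' : X → Y → ℝ, (∀ x y, 0 ≤ Q' x y) ∧ (∀ x y, Q' x y ≤ (∑ y', P x y') * R y) ∧
      (∀ x y, P x y ≤ T x y + Q' x y) ∧ (∀ x, ∑ y, Q' x y = ∑ y', P x y') := by
  have hR : 1 ≤ ∑ y, R y := one_le_sum_of_le_marginal_mul hPs hQR hQs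
  have hrow : ∀ x, ∃ q : Y → ℝ, (fun y => max (P x y - T x y) 0) ≤ q ∧
      q ≤ (fun y => (∑ y', P x y') * R y) ∧ ∑ y, q y = ∑ y', P x y' := fun x =>
    exists_le_le_sum_eq
      (fun y => max_le (by linarith [hPTQ x y, hQR x y]) ((hQ x y).trans (hQR x y)))
      (sum_le_sum fun y _ => max_le (by linarith [hT x y]) (hP x y))
      (by rw [← mul_sum]; exact le_mul_of_one_le_right (sum_nonneg fun y _ => hP x y) hR)
  choose Q' hlo hhi hsum using hrow
  refine ⟨Q', fun x y => (le_max_right _ _).trans (hlo x y), fun x y => hhi x y,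
    fun x y => ?_, hsum⟩
  linarith [(le_max_left _ _).trans (hlo x y)]

theorem classical_Imax_partial_eq_global_general {X Y : Type*} [Fintype X] [Fintype Y]
    (P : X → Y → ℝ) (hP : ∀ x y, 0 ≤ P x y) (hPs : ∑ x, ∑ y, P x y = 1)
    (ε : ℝ) :
    sInf {v : ℝ | ∃ (Q T : X → Y → ℝ) (R : Y → ℝ),
      (∀ x y, 0 ≤ Q x y) ∧ (∀ x y, 0 ≤ T x y) ∧ (∀ y, 0 ≤ R y) ∧
      (∀ x y, Q x y ≤ (∑ y', P x y') * R y) ∧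
      (∀ x y, P x y ≤ T x y + Q x y) ∧
      (∑ x, ∑ y, T x y) ≤ ε ∧
      (∀ x, ∑ y, Q x y = ∑ y', P x y') ∧
      v = ∑ y, R y} =
    sInf {v : ℝ | ∃ (Q T : X → Y → ℝ) (R : Y → ℝ),
      (∀ x y, 0 ≤ Q x y) ∧ (∀ x y, 0 ≤ T x y) ∧ (∀ y, 0 ≤ R y) ∧
      (∀ x y, Q x y ≤ (∑ y', P x y') * R y) ∧
      (∀ x y, P x y ≤ T x y + Q x y) ∧
      (∑ x, ∑ y, T x y) ≤ ε ∧
      (∑ x, ∑ y, Q x y = 1) ∧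
      v = ∑ y, R y} := by
  congr 1
  ext v
  constructor
  · rintro ⟨Q, T, R, hQ, hT, hR, hQR, hPTQ, hTs, hQm, hv⟩
    refine ⟨Q, T, R, hQ, hT, hR, hQR, hPTQ, hTs, ?_, hv⟩
    rw [sum_congr rfl fun x _ => hQm x, hPs]
  · rintro ⟨Q, T, R, hQ, hT, hR, hQR, hPTQ, hTs, hQs, hv⟩
    obtain ⟨Q', hQ', hQ'R, hPTQ', hQ'm⟩ :=
      exists_marginal_eq_of_sum_eq_one hP hPs hQ hT hQR hPTQ hQs
    exact ⟨Q', T, R, hQ', hT, hR, hQ'R, hPTQ', hTs, hQ'm, hv⟩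

/-- the classical partially smoothed max mutual information optimization
equals its global relaxation: replacing the marginal constraint `Q_X = P_X` by the
normalization `Σ Q = 1` does not change the optimal value. -/
theorem classical_Imax_partial_eq_global {X Y : Type*} [Fintype X] [Fintype Y]
    (P : X → Y → ℝ) (hP : ∀ x y, 0 ≤ P x y) (hPs : ∑ x, ∑ y, P x y = 1)
    (ε : ℝ) (hε : ε ∈ Set.Ioo (0 : ℝ) 1) :
    sInf {v : ℝ | ∃ (Q T : X → Y → ℝ) (R : Y → ℝ),
      (∀ x y, 0 ≤ Q x y) ∧ (∀ x y, 0 ≤ T x y) ∧ (∀ y, 0 ≤ R y) ∧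
      (∀ x y, Q x y ≤ (∑ y', P x y') * R y) ∧
      (∀ x y, P x y ≤ T x y + Q x y) ∧
      (∑ x, ∑ y, T x y) ≤ ε ∧
      (∀ x, ∑ y, Q x y = ∑ y', P x y') ∧
      v = ∑ y, R y} =
    sInf {v : ℝ | ∃ (Q T : X → Y → ℝ) (R : Y → ℝ),
      (∀ x y, 0 ≤ Q x y) ∧ (∀ x y, 0 ≤ T x y) ∧ (∀ y, 0 ≤ R y) ∧
      (∀ x y, Q x y ≤ (∑ y', P x y') * R y) ∧
      (∀ x y, P x y ≤ T x y + Q x y) ∧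
      (∑ x, ∑ y, T x y) ≤ ε ∧
      (∑ x, ∑ y, Q x y = 1) ∧
      v = ∑ y, R y} :=
  classical_Imax_partial_eq_global_general P hP hPs ε
end

section
/- In the classical max mutual information relaxation inf { Σ_y R(y) : P_X(x)R(y) ≥ P(x,y) − T(x,y), Σ T ≤ ε, Σ_{x,y} Q = 1, … }, any optimal R* satisfies Σ_y R*(y) ≥ 1, and one may assume T*(x,y) ≤ P(x,y) for all x, y; consequently for each x with P_X(x) > 0 one has R*(y) ≥ P_{Y|X=x}(y) − T*_{Y|X=x}(y) with Σ_y R*(y) ≥ 1 ≥ Σ_y (P_{Y|X=x}(y) − T*_{Y|X=x}(y)), so a normalized conditional distribution Q̃_{Y|X=x} with P_{Y|X=x} − T*_{Y|X=x} ≤ Q̃_{Y|X=x} ≤ R* exists. -/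
/-!
Summing the constraint `Q(x,y) ≤ P_X(x) R(y)` over `x` and `y` gives `1 = Σ Q ≤ Σ_y R`.
Dividing the constraint `P ≤ T + Q ≤ T + P_X R` by `P_X(x) > 0` gives
`P_{Y|X=x} - T_{Y|X=x} ≤ R` pointwise, while `T ≥ 0` gives `Σ_y (P_{Y|X=x} - T_{Y|X=x}) ≤ 1`.
A normalized `Q̃_{Y|X=x}` between the two is then found on the segment joining them,
since the total mass moves continuously (indeed affinely) from at most `1` to at least `1`.
-/

open Finset

lemma exists_sum_eq_of_le_of_sum_le_le_sum {ι : Type*} [Fintype ι] {f g : ι → ℝ} {c : ℝ}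
    (hfg : ∀ i, f i ≤ g i) (hfc : ∑ i, f i ≤ c) (hcg : c ≤ ∑ i, g i) :
    ∃ h : ι → ℝ, ∑ i, h i = c ∧ ∀ i, f i ≤ h i ∧ h i ≤ g i := by
  set D := ∑ i, g i - ∑ i, f i
  rcases (sub_nonneg.2 (sum_le_sum fun i _ => hfg i) : 0 ≤ D).eq_or_lt with hD | hD
  · exact ⟨f, by linarith, fun i => ⟨le_rfl, hfg i⟩⟩
  set t := (c - ∑ i, f i) / D
  have ht0 : 0 ≤ t := div_nonneg (by linarith) hD.le
  have ht1 : t ≤ 1 := (div_le_one hD).2 (by linarith)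
  refine ⟨fun i => f i + t * (g i - f i), ?_, fun i => ⟨?_, ?_⟩⟩
  · rw [sum_add_distrib, ← mul_sum, sum_sub_distrib, div_mul_cancel₀ _ hD.ne']
    ring
  · nlinarith [hfg i]
  · nlinarith [hfg i]

lemma sum_sum_le_mul_sum_of_le_marginal_mul {X Y : Type*} [Fintype X] [Fintype Y]
    {P Q : X → Y → ℝ} {R : Y → ℝ} (hQR : ∀ x y, Q x y ≤ (∑ y', P x y') * R y) :
    ∑ x, ∑ y, Q x y ≤ (∑ x, ∑ y, P x y) * ∑ y, R y :=
  calc ∑ x, ∑ y, Q x y ≤ ∑ x, ∑ y, (∑ y', P x y') * R y :=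
        sum_le_sum fun x _ => sum_le_sum fun y _ => hQR x y
    _ = (∑ x, ∑ y, P x y) * ∑ y, R y := by simp_rw [← mul_sum, sum_mul]

lemma le_min_add_of_le_add {p t q : ℝ} (hq : 0 ≤ q) (h : p ≤ t + q) : p ≤ min t p + q := by
  rw [← min_add_add_right]
  exact le_min h (le_add_of_nonneg_right hq)

lemma div_sub_div_le_of_le_add_of_le_mul {p t q s r : ℝ} (hs : 0 < s)
    (hp : p ≤ t + q) (hq : q ≤ s * r) : p / s - t / s ≤ r := by
  rw [div_sub_div_same, div_le_iff₀ hs]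
  linarith

lemma sum_div_sub_div_sum_le_one {Y : Type*} [Fintype Y] {p t : Y → ℝ}
    (hs : 0 < ∑ y', p y') (ht : ∀ y, 0 ≤ t y) :
    ∑ y, (p y / ∑ y', p y' - t y / ∑ y', p y') ≤ 1 := by
  rw [sum_sub_distrib, ← sum_div, ← sum_div, div_self hs.ne', sub_le_self_iff]
  exact div_nonneg (sum_nonneg fun y _ => ht y) hs.le

theorem Imax_sandwich_lemma_general {X Y : Type*} [Fintype X] [Fintype Y]
    (P : X → Y → ℝ) (hP : ∀ x y, 0 ≤ P x y) (hPs : ∑ x, ∑ y, P x y = 1)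
    (ε : ℝ)
    (Q T : X → Y → ℝ) (R : Y → ℝ)
    (hQ0 : ∀ x y, 0 ≤ Q x y) (hT0 : ∀ x y, 0 ≤ T x y)
    (hQR : ∀ x y, Q x y ≤ (∑ y', P x y') * R y)
    (hTQ : ∀ x y, P x y ≤ T x y + Q x y)
    (hTs : (∑ x, ∑ y, T x y) ≤ ε)
    (hQn : ∑ x, ∑ y, Q x y = 1) :
    (1 ≤ ∑ y, R y) ∧
    ((∀ x y, 0 ≤ min (T x y) (P x y)) ∧
      (∀ x y, P x y ≤ min (T x y) (P x y) + Q x y) ∧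
      (∑ x, ∑ y, min (T x y) (P x y)) ≤ ε) ∧
    ((∀ x y, T x y ≤ P x y) →
      (∀ x, 0 < ∑ y', P x y' →
        (∀ y, P x y / (∑ y', P x y') - T x y / (∑ y', P x y') ≤ R y) ∧
        (∑ y, (P x y / (∑ y', P x y') - T x y / (∑ y', P x y'))) ≤ 1) ∧
      ∃ Qt : X → Y → ℝ, ∀ x, 0 < ∑ y', P x y' →
        (∀ y, 0 ≤ Qt x y) ∧ (∑ y, Qt x y = 1) ∧
        (∀ y, P x y / (∑ y', P x y') - T x y / (∑ y', P x y') ≤ Qt x y ∧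
          Qt x y ≤ R y)) := by
  have hRs : 1 ≤ ∑ y, R y := by
    simpa [hQn, hPs] using sum_sum_le_mul_sum_of_le_marginal_mul hQR
  have hTmin : ∑ x, ∑ y, min (T x y) (P x y) ≤ ε :=
    (sum_le_sum fun x _ => sum_le_sum fun y _ => min_le_left _ _).trans hTs
  refine ⟨hRs, ⟨fun x y => le_min (hT0 x y) (hP x y),
    fun x y => le_min_add_of_le_add (hQ0 x y) (hTQ x y), hTmin⟩, fun hTP => ?_⟩
  have hcond : ∀ x, 0 < ∑ y', P x y' →
      (∀ y, P x y / (∑ y', P x y') - T x y / (∑ y', P x y') ≤ R y) ∧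
      (∑ y, (P x y / (∑ y', P x y') - T x y / (∑ y', P x y'))) ≤ 1 := fun x hx =>
    ⟨fun y => div_sub_div_le_of_le_add_of_le_mul hx (hTQ x y) (hQR x y),
      sum_div_sub_div_sum_le_one hx (hT0 x)⟩
  have hQt : ∀ x, ∃ q : Y → ℝ, 0 < ∑ y', P x y' → ∑ y, q y = 1 ∧
      ∀ y, P x y / (∑ y', P x y') - T x y / (∑ y', P x y') ≤ q y ∧ q y ≤ R y := by
    intro x
    by_cases hx : 0 < ∑ y', P x y'
    · obtain ⟨q, hq⟩ := exists_sum_eq_of_le_of_sum_le_le_sum (hcond x hx).1 (hcond x hx).2 hRs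
      exact ⟨q, fun _ => hq⟩
    · exact ⟨0, fun h => absurd h hx⟩
  choose Qt hQt using hQt
  refine ⟨hcond, Qt, fun x hx => ⟨fun y => ?_, (hQt x hx).1, (hQt x hx).2⟩⟩
  have hlower : 0 ≤ P x y / (∑ y', P x y') - T x y / (∑ y', P x y') := by
    rw [div_sub_div_same]
    exact div_nonneg (sub_nonneg.2 (hTP x y)) hx.le
  exact hlower.trans ((hQt x hx).2 y).1

/-- sandwich lemma for the classical max mutual information relaxation:
for feasible `(Q, T, R)` in the relaxed optimization one has `Σ_y R(y) ≥ 1`; replacing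
`T` by `min(T, P)` preserves feasibility (so one may assume `T ≤ P`); and whenever
`T ≤ P`, for each `x` with `P_X(x) > 0`, `R(y) ≥ P_{Y|X=x}(y) − T_{Y|X=x}(y)` with
`Σ_y R(y) ≥ 1 ≥ Σ_y (P_{Y|X=x}(y) − T_{Y|X=x}(y))`, so there exists a normalized
conditional distribution `Q̃_{Y|X=x}` sandwiched between them. -/
theorem Imax_sandwich_lemma {X Y : Type*} [Fintype X] [Fintype Y]
    (P : X → Y → ℝ) (hP : ∀ x y, 0 ≤ P x y) (hPs : ∑ x, ∑ y, P x y = 1)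
    (ε : ℝ) (hε : ε ∈ Set.Ioo (0 : ℝ) 1)
    (Q T : X → Y → ℝ) (R : Y → ℝ)
    (hQ0 : ∀ x y, 0 ≤ Q x y) (hT0 : ∀ x y, 0 ≤ T x y) (hR0 : ∀ y, 0 ≤ R y)
    (hQR : ∀ x y, Q x y ≤ (∑ y', P x y') * R y)
    (hTQ : ∀ x y, P x y ≤ T x y + Q x y)
    (hTs : (∑ x, ∑ y, T x y) ≤ ε)
    (hQn : ∑ x, ∑ y, Q x y = 1) :
    (1 ≤ ∑ y, R y) ∧
    ((∀ x y, 0 ≤ min (T x y) (P x y)) ∧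
      (∀ x y, P x y ≤ min (T x y) (P x y) + Q x y) ∧
      (∑ x, ∑ y, min (T x y) (P x y)) ≤ ε) ∧
    ((∀ x y, T x y ≤ P x y) →
      (∀ x, 0 < ∑ y', P x y' →
        (∀ y, P x y / (∑ y', P x y') - T x y / (∑ y', P x y') ≤ R y) ∧
        (∑ y, (P x y / (∑ y', P x y') - T x y / (∑ y', P x y'))) ≤ 1) ∧
      ∃ Qt : X → Y → ℝ, ∀ x, 0 < ∑ y', P x y' →
        (∀ y, 0 ≤ Qt x y) ∧ (∑ y, Qt x y = 1) ∧
        (∀ y, P x y / (∑ y', P x y') - T x y / (∑ y', P x y') ≤ Qt x y ∧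
          Qt x y ≤ R y)) :=
  Imax_sandwich_lemma_general P hP hPs ε Q T R hQ0 hT0 hQR hTQ hTs hQn
end
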